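/- For every A ∈ ℝ² and every φ ∈ ℝ, the point A inspects P_φ if and only if A lies in the closed halfspace bounded by the tangent line to the unit circle at P_φ that does not contain the interior of the unit disk; equivalently, A inspects P_φ if and only if ⟨A, P_φ⟩ ≥ 1, where ⟨·,·⟩ is the Euclidean inner product. -/

import Mathlib

open Real Set

/-- The point of the unit circle at angle `φ`. -/
noncomputable def Ppt (φ : ℝ) : EuclideanSpace ℝ (Fin 2) := WithLp.toLp 2 ![Real.cos φ, Real.sin φ]

/-- `A` inspects the perimeter point `P_φ` if no convex combination of `A` and `P_φ`
lies in the open unit disk. -/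
def Inspects (A : EuclideanSpace ℝ (Fin 2)) (φ : ℝ) : Prop :=
  ∀ s ∈ Set.Icc (0:ℝ) 1, 1 ≤ ‖(1 - s) • A + s • Ppt φ‖

/-!
For a unit vector `P` and `u = 1 - s`,
`‖(1 - s) • A + s • P‖² = 1 + u * (2 * (⟪A, P⟫ - 1) + u * ‖A - P‖²)`.
The second factor tends to `2 * (⟪A, P⟫ - 1)` as `u → 0⁺`, so the points of the segment near `P`
stay outside the open unit ball exactly when `⟪A, P⟫ ≥ 1`, and then the whole segment does.
-/

open Filter Topology

lemma norm_Ppt (φ : ℝ) : ‖Ppt φ‖ = 1 := by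
  simp [EuclideanSpace.norm_eq, Fin.sum_univ_two, Ppt]

lemma forall_mem_Icc_mul_nonneg_iff {a c : ℝ} (hc : 0 ≤ c) :
    (∀ s ∈ Icc (0 : ℝ) 1, 0 ≤ (1 - s) * (2 * a + (1 - s) * c)) ↔ 0 ≤ a := by
  constructor
  · intro h
    have h_tendsto : Tendsto (fun s : ℝ => 2 * a + (1 - s) * c) (𝓝[<] 1) (𝓝 (2 * a)) := by
      have : Continuous fun s : ℝ => 2 * a + (1 - s) * c := by fun_prop
      simpa using (this.tendsto 1).mono_left nhdsWithin_le_nhds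
    have h_event : ∀ᶠ s in 𝓝[<] (1 : ℝ), 0 ≤ 2 * a + (1 - s) * c := by
      filter_upwards [Ioo_mem_nhdsLT (zero_lt_one' ℝ)] with s hs
      exact nonneg_of_mul_nonneg_right (by simpa [mul_comm] using h s (Ioo_subset_Icc_self hs))
        (sub_pos.2 hs.2)
    linarith [ge_of_tendsto h_tendsto h_event]
  · rintro ha s ⟨-, hs1⟩
    have : 0 ≤ 1 - s := sub_nonneg.2 hs1
    positivity

section InnerProductSpace

variable {E : Type*} [NormedAddCommGroup E] [InnerProductSpace ℝ E]

lemma norm_sq_sub_smul_add_smul_of_norm_eq_one {A P : E} (hP : ‖P‖ = 1) (s : ℝ) :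
    ‖(1 - s) • A + s • P‖ ^ 2 =
      1 + (1 - s) * (2 * (inner ℝ A P - 1) + (1 - s) * ‖A - P‖ ^ 2) := by
  have : (1 - s) • A + s • P = P + (1 - s) • (A - P) := by module
  rw [this, norm_add_sq_real, norm_smul, mul_pow, real_inner_smul_right, inner_sub_right,
    real_inner_comm, real_inner_self_eq_norm_sq, hP, Real.norm_eq_abs, sq_abs]
  ring

theorem forall_mem_Icc_one_le_norm_iff {A P : E} (hP : ‖P‖ = 1) :
    (∀ s ∈ Icc (0 : ℝ) 1, 1 ≤ ‖(1 - s) • A + s • P‖) ↔ 1 ≤ inner ℝ A P := by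
  have hsq : ∀ s, 1 ≤ ‖(1 - s) • A + s • P‖ ↔
      0 ≤ (1 - s) * (2 * (inner ℝ A P - 1) + (1 - s) * ‖A - P‖ ^ 2) := fun s => by
    rw [← one_le_sq_iff₀ (norm_nonneg _), norm_sq_sub_smul_add_smul_of_norm_eq_one hP]
    exact le_add_iff_nonneg_right 1
  simp_rw [hsq, forall_mem_Icc_mul_nonneg_iff (sq_nonneg _), sub_nonneg]

end InnerProductSpace

theorem inspects_iff_inner_ge_one (A : EuclideanSpace ℝ (Fin 2)) (φ : ℝ) :
    Inspects A φ ↔ 1 ≤ (inner ℝ A (Ppt φ) : ℝ) :=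
  forall_mem_Icc_one_le_norm_iff (norm_Ppt φ)
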